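/- arXiv:0902.3954 — 7 statements merged into one kernel-verified Lean document; each statement's English description precedes it below -/
import Mathlib

section
/- For a multi-affine polynomial Q(x1,x2,x3,x4), on the zero set Q = 0 the products of opposite biquadratics agree: h_{12}·h_{34} = h_{13}·h_{24} = h_{14}·h_{23}, where h_{ij} = Q·Q_{,ij} − Q_{,i}·Q_{,j}. That is, h_{12}h_{34} − h_{13}h_{24} and h_{13}h_{24} − h_{14}h_{23} are divisible by Q (equivalently vanish whenever Q(x1,x2,x3,x4)=0). -/
open MvPolynomial

/-- For a multi-affine polynomial `Q` in four variables, with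
`h_{ij} = Q·Q_{,ij} − Q_{,i}·Q_{,j}`, the products of opposite biquadratics agree
on the zero set of `Q`: `h₁₂h₃₄ − h₁₃h₂₄` and `h₁₃h₂₄ − h₁₄h₂₃` are divisible by `Q`. -/
theorem stmt_2 (Q : MvPolynomial (Fin 4) ℂ)
    (haff : ∀ i : Fin 4, Q.degreeOf i ≤ 1)
    (h : Fin 4 → Fin 4 → MvPolynomial (Fin 4) ℂ)
    (hdef : ∀ i j, h i j = Q * pderiv j (pderiv i Q) - pderiv i Q * pderiv j Q) :
    Q ∣ (h 0 1 * h 2 3 - h 0 2 * h 1 3) ∧ Q ∣ (h 0 2 * h 1 3 - h 0 3 * h 1 2) := by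
  set p0 := pderiv (0 : Fin 4) Q
  set p1 := pderiv (1 : Fin 4) Q
  set p2 := pderiv (2 : Fin 4) Q
  set p3 := pderiv (3 : Fin 4) Q
  constructor
  · exact ⟨Q * pderiv 1 (pderiv 0 Q) * pderiv 3 (pderiv 2 Q)
      - pderiv 1 (pderiv 0 Q) * p2 * p3 - pderiv 3 (pderiv 2 Q) * p0 * p1
      - Q * pderiv 2 (pderiv 0 Q) * pderiv 3 (pderiv 1 Q)
      + pderiv 2 (pderiv 0 Q) * p1 * p3 + pderiv 3 (pderiv 1 Q) * p0 * p2,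
      by rw [hdef, hdef, hdef, hdef]; ring⟩
  · exact ⟨Q * pderiv 2 (pderiv 0 Q) * pderiv 3 (pderiv 1 Q)
      - pderiv 2 (pderiv 0 Q) * p1 * p3 - pderiv 3 (pderiv 1 Q) * p0 * p2
      - Q * pderiv 3 (pderiv 0 Q) * pderiv 2 (pderiv 1 Q)
      + pderiv 3 (pderiv 0 Q) * p1 * p2 + pderiv 2 (pderiv 1 Q) * p0 * p3,
      by rw [hdef, hdef, hdef, hdef]; ring⟩
end

section
/- The H1 equation is 3D-consistent: consider u-values on the vertices of a cube, u, u1, u2, u3, u12, u13, u23, with the H1 equation imposed on the three faces adjacent to u: (u − u12)(u1 − u2) + α2 − α1 = 0 determines u12, and similarly u13, u23. Then the three values of u123 computed from the three remaining faces coincide, and are given by u123 = (α1 u1(u3−u2) + α2 u2(u1−u3) + α3 u3(u2−u1)) / (α1(u3−u2) + α2(u1−u3) + α3(u2−u1)), which is independent of u (tetrahedron property). Assume all denominators involved are nonzero. -/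
/-- 3D-consistency of H1: with `u_ij = u − (α_i − α_j)/(u_i − u_j)`, the three ways
of computing `u₁₂₃` from the remaining faces coincide and are given by a formula
independent of `u` (tetrahedron property). -/
theorem stmt_5 (u u1 u2 u3 α1 α2 α3 : ℂ)
    (h12 : u1 ≠ u2) (h23 : u2 ≠ u3) (h13 : u1 ≠ u3)
    (u12 u13 u23 : ℂ)
    (hu12 : u12 = u - (α1 - α2) / (u1 - u2))
    (hu13 : u13 = u - (α1 - α3) / (u1 - u3))
    (hu23 : u23 = u - (α2 - α3) / (u2 - u3))
    (hd1 : u12 ≠ u13) (hd2 : u12 ≠ u23) (hd3 : u13 ≠ u23)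
    (hden : α1 * (u3 - u2) + α2 * (u1 - u3) + α3 * (u2 - u1) ≠ 0) :
    u1 - (α2 - α3) / (u12 - u13) = u2 - (α1 - α3) / (u12 - u23) ∧
    u2 - (α1 - α3) / (u12 - u23) = u3 - (α1 - α2) / (u13 - u23) ∧
    u1 - (α2 - α3) / (u12 - u13)
      = (α1 * u1 * (u3 - u2) + α2 * u2 * (u1 - u3) + α3 * u3 * (u2 - u1))
        / (α1 * (u3 - u2) + α2 * (u1 - u3) + α3 * (u2 - u1)) := by
  have h12' : u1 - u2 ≠ 0 := sub_ne_zero.mpr h12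
  have h23' : u2 - u3 ≠ 0 := sub_ne_zero.mpr h23
  have h13' : u1 - u3 ≠ 0 := sub_ne_zero.mpr h13
  have hd1' : u12 - u13 ≠ 0 := sub_ne_zero.mpr hd1
  have hd2' : u12 - u23 ≠ 0 := sub_ne_zero.mpr hd2
  have hd3' : u13 - u23 ≠ 0 := sub_ne_zero.mpr hd3
  -- key rewrites for differences
  have e1 : u12 - u13 = ((α1 - α3) * (u1 - u2) - (α1 - α2) * (u1 - u3)) / ((u1 - u2) * (u1 - u3)) := by
    subst hu12 hu13; field_simp; ring
  have e2 : u12 - u23 = ((α2 - α3) * (u1 - u2) - (α1 - α2) * (u2 - u3)) / ((u1 - u2) * (u2 - u3)) := by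
    subst hu12 hu23; field_simp; ring
  have e3 : u13 - u23 = ((α2 - α3) * (u1 - u3) - (α1 - α3) * (u2 - u3)) / ((u1 - u3) * (u2 - u3)) := by
    subst hu13 hu23; field_simp; ring
  have k : ((α1 - α3) * (u1 - u2) - (α1 - α2) * (u1 - u3))
      = α1 * (u3 - u2) + α2 * (u1 - u3) + α3 * (u2 - u1) := by ring
  have k2 : ((α2 - α3) * (u1 - u2) - (α1 - α2) * (u2 - u3))
      = α1 * (u3 - u2) + α2 * (u1 - u3) + α3 * (u2 - u1) := by ring
  have k3 : ((α2 - α3) * (u1 - u3) - (α1 - α3) * (u2 - u3))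
      = α1 * (u3 - u2) + α2 * (u1 - u3) + α3 * (u2 - u1) := by ring
  rw [e1, e2, e3, k, k2, k3]
  set D := α1 * (u3 - u2) + α2 * (u1 - u3) + α3 * (u2 - u1) with hD
  constructor
  · field_simp
    ring
  constructor
  · field_simp
    ring
  · field_simp
    ring
end

section
/- Bianchi permutability for H1: let u⁰ be a function ℤ² → ℂ, and suppose u¹ and u² are obtained from u⁰ via the H1 Bäcklund transformation with parameters λ1 and λ2 respectively, i.e. (u⁰_{(0,0)} − u¹_{(1,0)})(u⁰_{(1,0)} − u¹_{(0,0)}) + λ1 − α = 0 and analogous relations. Then the function u¹² defined algebraically at each lattice site by u¹² = u⁰ − (λ1 − λ2)/(u¹ − u²) satisfies the Bäcklund relations from u¹ with parameter λ2 and from u² with parameter λ1 simultaneously (assuming u¹ ≠ u² pointwise). -/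
private lemma h1_key (α lam1 lam2 a b p q r s : ℂ)
    (h1 : (a-q)*(b-p)+lam1-α=0) (h2 : (a-s)*(b-r)+lam2-α=0)
    (hpr : p - r ≠ 0) (hqs : q - s ≠ 0) :
    (p - (b - (lam1-lam2)/(q-s))) * (q - (a - (lam1-lam2)/(p-r))) + lam2 - α = 0 := by
  field_simp
  linear_combination ((q-s)*(p-r) + (lam1-lam2)) * h1 - (lam1-lam2) * h2

private lemma h1_key' (α lam1 lam2 a b p q r s : ℂ)
    (h1 : (a-q)*(b-p)+lam1-α=0) (h2 : (a-s)*(b-r)+lam2-α=0)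
    (hpr : p - r ≠ 0) (hqs : q - s ≠ 0) :
    (r - (b - (lam1-lam2)/(q-s))) * (s - (a - (lam1-lam2)/(p-r))) + lam1 - α = 0 := by
  have h := h1_key α lam2 lam1 a b r s p q h2 h1 (by
    intro h; exact hpr (by linear_combination -h)) (by
    intro h; exact hqs (by linear_combination -h))
  have e1 : (lam2-lam1)/(s-q) = (lam1-lam2)/(q-s) := by
    rw [← neg_div_neg_eq]; ring_nf
  have e2 : (lam2-lam1)/(r-p) = (lam1-lam2)/(p-r) := by
    rw [← neg_div_neg_eq]; ring_nf
  rw [e1, e2] at h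
  linear_combination h

/-- Bianchi permutability for H1: if `u¹`, `u²` are obtained from `u⁰` by the H1
Bäcklund transformation with parameters `λ1`, `λ2`, then
`u¹² = u⁰ − (λ1 − λ2)/(u¹ − u²)` satisfies the Bäcklund relations from `u¹` with
parameter `λ2` and from `u²` with parameter `λ1`. -/
theorem stmt_7 (α β lam1 lam2 : ℂ) (u0 u1 u2 : ℤ → ℤ → ℂ)
    (hBT1n : ∀ n m, (u0 n m - u1 (n+1) m) * (u0 (n+1) m - u1 n m) + lam1 - α = 0)
    (hBT1m : ∀ n m, (u0 n m - u1 n (m+1)) * (u0 n (m+1) - u1 n m) + lam1 - β = 0)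
    (hBT2n : ∀ n m, (u0 n m - u2 (n+1) m) * (u0 (n+1) m - u2 n m) + lam2 - α = 0)
    (hBT2m : ∀ n m, (u0 n m - u2 n (m+1)) * (u0 n (m+1) - u2 n m) + lam2 - β = 0)
    (hne : ∀ n m, u1 n m ≠ u2 n m)
    (u12 : ℤ → ℤ → ℂ)
    (hdef : ∀ n m, u12 n m = u0 n m - (lam1 - lam2) / (u1 n m - u2 n m)) :
    (∀ n m, (u1 n m - u12 (n+1) m) * (u1 (n+1) m - u12 n m) + lam2 - α = 0) ∧
    (∀ n m, (u1 n m - u12 n (m+1)) * (u1 n (m+1) - u12 n m) + lam2 - β = 0) ∧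
    (∀ n m, (u2 n m - u12 (n+1) m) * (u2 (n+1) m - u12 n m) + lam1 - α = 0) ∧
    (∀ n m, (u2 n m - u12 n (m+1)) * (u2 n (m+1) - u12 n m) + lam1 - β = 0) := by
  have hsub : ∀ n m, u1 n m - u2 n m ≠ 0 := fun n m => sub_ne_zero_of_ne (hne n m)
  refine ⟨fun n m => ?_, fun n m => ?_, fun n m => ?_, fun n m => ?_⟩
  · rw [hdef, hdef]
    exact h1_key α lam1 lam2 (u0 n m) (u0 (n+1) m) (u1 n m) (u1 (n+1) m)
      (u2 n m) (u2 (n+1) m) (hBT1n n m) (hBT2n n m) (hsub n m) (hsub (n+1) m)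
  · rw [hdef, hdef]
    exact h1_key β lam1 lam2 (u0 n m) (u0 n (m+1)) (u1 n m) (u1 n (m+1))
      (u2 n m) (u2 n (m+1)) (hBT1m n m) (hBT2m n m) (hsub n m) (hsub n (m+1))
  · rw [hdef, hdef]
    exact h1_key' α lam1 lam2 (u0 n m) (u0 (n+1) m) (u1 n m) (u1 (n+1) m)
      (u2 n m) (u2 (n+1) m) (hBT1n n m) (hBT2n n m) (hsub n m) (hsub (n+1) m)
  · rw [hdef, hdef]
    exact h1_key' β lam1 lam2 (u0 n m) (u0 n (m+1)) (u1 n m) (u1 n (m+1))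
      (u2 n m) (u2 n (m+1)) (hBT1m n m) (hBT2m n m) (hsub n m) (hsub n (m+1))
end

section
/- Lax pair compatibility for H1: define the 2×2 matrix L(x,y;a,λ) = (1/√(λ−a)) · [[x, a − λ − x y],[1, −y]] (any fixed branch of the square root; equivalently work with the unnormalized matrix). Then for functions u on ℤ², the compatibility condition L(u_{(0,1)}, u_{(1,1)}; α, λ)·L(u_{(0,0)}, u_{(0,1)}; β, λ) = L(u_{(1,0)}, u_{(1,1)}; β, λ)·L(u_{(0,0)}, u_{(1,0)}; α, λ) holds for all values of the spectral parameter λ if and only if (u_{(0,0)} − u_{(1,1)})(u_{(1,0)} − u_{(0,1)}) + β − α = 0 (for generic u, i.e. assuming u_{(1,0)} ≠ u_{(0,1)} when needed). -/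
/-- Lax pair compatibility for H1 with the unnormalized Lax matrix
`M(x,y;a,λ) = [[x, a − λ − xy],[1, −y]]`: the compatibility condition holds for all
values of the spectral parameter `λ` if and only if the H1 equation
`(u₀₀ − u₁₁)(u₁₀ − u₀₁) + β − α = 0` holds (assuming `u₁₀ ≠ u₀₁`). -/
theorem stmt_8 (α β u00 u10 u01 u11 : ℂ) (hne : u10 ≠ u01)
    (M : ℂ → ℂ → ℂ → ℂ → Matrix (Fin 2) (Fin 2) ℂ)
    (hM : ∀ x y a lam, M x y a lam = !![x, a - lam - x * y; 1, -y]) :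
    (∀ lam : ℂ, M u01 u11 α lam * M u00 u01 β lam
        = M u10 u11 β lam * M u00 u10 α lam)
      ↔ (u00 - u11) * (u10 - u01) + β - α = 0 := by
  simp only [hM]
  constructor
  · intro h
    have h0 := h 0
    have := congrFun (congrFun h0 0) 0
    simp [Matrix.mul_apply, Fin.sum_univ_two] at this
    linear_combination -this
  · intro hQ lam
    ext i j
    fin_cases i <;> fin_cases j <;>
        simp [Matrix.mul_apply, Fin.sum_univ_two]
    · linear_combination -hQ
    · linear_combination (u01 + u10) * hQ
    · linear_combination hQ
end

section
/- Three-point generalized symmetry of H1: the characteristic R = 1/(u_{(1,0)} − u_{(−1,0)}) satisfies the linearized symmetry condition for H1. Concretely, for any solution u of (u_{(0,0)} − u_{(1,1)})(u_{(1,0)} − u_{(0,1)}) + β − α = 0 on ℤ² (with nondegeneracy u_{(1,0)} ≠ u_{(−1,0)} etc.), the quantity D := (u_{(1,0)} − u_{(0,1)})·(R_{(0,0)} − R_{(1,1)}) + (u_{(0,0)} − u_{(1,1)})·(R_{(1,0)} − R_{(0,1)}) vanishes identically, where R_{(i,j)} = 1/(u_{(i+1,j)} − u_{(i−1,j)}).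 -/
/-- Three-point generalized symmetry of H1: for a solution `u` of H1 on `ℤ²`, the
characteristic `R = 1/(u_{(1,0)} − u_{(−1,0)})` satisfies the linearized symmetry
condition: `(u₁₀ − u₀₁)(R₀₀ − R₁₁) + (u₀₀ − u₁₁)(R₁₀ − R₀₁) = 0`. -/
theorem stmt_9 (α β : ℂ) (u : ℤ → ℤ → ℂ)
    (hsol : ∀ n m, (u n m - u (n+1) (m+1)) * (u (n+1) m - u n (m+1)) + β - α = 0)
    (hnd : ∀ n m, u (n+1) m ≠ u (n-1) m)
    (R : ℤ → ℤ → ℂ)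
    (hR : ∀ n m, R n m = 1 / (u (n+1) m - u (n-1) m)) :
    ∀ n m, (u (n+1) m - u n (m+1)) * (R n m - R (n+1) (m+1))
         + (u n m - u (n+1) (m+1)) * (R (n+1) m - R n (m+1)) = 0 := by
  intro n m
  have e1 := hsol n m
  have e2 : (u (n+1) m - u (n+2) (m+1)) * (u (n+2) m - u (n+1) (m+1)) + β - α = 0 := by
    have h := hsol (n+1) m
    have h1 : n + 1 + 1 = n + 2 := by ring
    rwa [h1] at h
  have e3 : (u (n-1) m - u n (m+1)) * (u n m - u (n-1) (m+1)) + β - α = 0 := by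
    have h := hsol (n-1) m
    have h1 : n - 1 + 1 = n := by ring
    rwa [h1] at h
  have d1 : u (n+1) m - u (n-1) m ≠ 0 := sub_ne_zero.mpr (hnd n m)
  have d2 : u (n+2) (m+1) - u n (m+1) ≠ 0 := by
    have h := hnd (n+1) (m+1)
    have h1 : n + 1 + 1 = n + 2 := by ring
    have h2 : n + 1 - 1 = n := by ring
    rw [h1, h2] at h
    exact sub_ne_zero.mpr h
  have d3 : u (n+2) m - u n m ≠ 0 := by
    have h := hnd (n+1) m
    have h1 : n + 1 + 1 = n + 2 := by ring
    have h2 : n + 1 - 1 = n := by ring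
    rw [h1, h2] at h
    exact sub_ne_zero.mpr h
  have d4 : u (n+1) (m+1) - u (n-1) (m+1) ≠ 0 := sub_ne_zero.mpr (hnd n (m+1))
  have hR1 : R n m = 1 / (u (n+1) m - u (n-1) m) := hR n m
  have hR2 : R (n+1) (m+1) = 1 / (u (n+2) (m+1) - u n (m+1)) := by
    have h := hR (n+1) (m+1)
    have h1 : n + 1 + 1 = n + 2 := by ring
    have h2 : n + 1 - 1 = n := by ring
    rwa [h1, h2] at h
  have hR3 : R (n+1) m = 1 / (u (n+2) m - u n m) := by
    have h := hR (n+1) m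
    have h1 : n + 1 + 1 = n + 2 := by ring
    have h2 : n + 1 - 1 = n := by ring
    rwa [h1, h2] at h
  have hR4 : R n (m+1) = 1 / (u (n+1) (m+1) - u (n-1) (m+1)) := hR n (m+1)
  rw [hR1, hR2, hR3, hR4]
  field_simp
  linear_combination
    (-2*α + 2*β + u (n-1) m * u n m - u (n-1) m * u (n+1) (m+1)
      + u (n-1) (m+1) * u n (m+1) - u (n-1) (m+1) * u (n+1) m
      - 2 * u n m * u n (m+1) + u n m * u (n+2) (m+1) + u n (m+1) * u (n+2) m
      + u (n+1) m * u (n+2) m + u (n+1) (m+1) * u (n+2) (m+1)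
      - 2 * u (n+2) m * u (n+2) (m+1)) * e1
    + (2*α - 2*β - u (n-1) m * u n m + u (n-1) m * u (n+1) (m+1)
      - u (n-1) (m+1) * u n (m+1) + u (n-1) (m+1) * u (n+1) m
      + 2 * u n m * u n (m+1) - u n m * u (n+1) m - u n (m+1) * u (n+1) (m+1)) * e2
    + (2 * u n m * u n (m+1) - u n m * u (n+1) m - u n m * u (n+2) (m+1)
      - u n (m+1) * u (n+1) (m+1) - u n (m+1) * u (n+2) m
      + u (n+1) m * u (n+2) m + u (n+1) (m+1) * u (n+2) (m+1)) * e3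
end

section
/- Commutativity of the H1 symmetry flows on solutions: for a solution u of H1 on ℤ² with all relevant differences nonzero, define R_n = 1/(u_{(1,0)} − u_{(−1,0)}) and R_m = 1/(u_{(0,1)} − u_{(0,−1)}), and let S_n, S_m be the lattice shifts. Then the two three-point symmetry flows of H1 commute, i.e. ((S_n R_m) − (S_n^{−1} R_m))·R_n² = ((S_m R_n) − (S_m^{−1} R_n))·R_m², equivalently (S_n R_m − S_n^{−1} R_m)/(u_{(1,0)} − u_{(−1,0)})² = (S_m R_n − S_m^{−1} R_n)/(u_{(0,1)} − u_{(0,−1)})², for every solution u of H1. -/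
/-- Commutativity of the two three-point symmetry flows of H1 on solutions:
with `Rₙ(i,j) = 1/(u_{(i+1,j)} − u_{(i−1,j)})` and `Rₘ(i,j) = 1/(u_{(i,j+1)} − u_{(i,j−1)})`,
`(SₙRₘ − Sₙ⁻¹Rₘ)·Rₙ² = (SₘRₙ − Sₘ⁻¹Rₙ)·Rₘ²` holds at every lattice point. -/
theorem stmt_16 (α β : ℂ) (u : ℤ → ℤ → ℂ)
    (hsol : ∀ i j, (u i j - u (i+1) (j+1)) * (u (i+1) j - u i (j+1)) = α - β)
    (hndn : ∀ i j, u (i+1) j ≠ u (i-1) j)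
    (hndm : ∀ i j, u i (j+1) ≠ u i (j-1))
    (Rn Rm : ℤ → ℤ → ℂ)
    (hRn : ∀ i j, Rn i j = 1 / (u (i+1) j - u (i-1) j))
    (hRm : ∀ i j, Rm i j = 1 / (u i (j+1) - u i (j-1))) :
    ∀ i j, (Rm (i+1) j - Rm (i-1) j) * (Rn i j) ^ 2
         = (Rn i (j+1) - Rn i (j-1)) * (Rm i j) ^ 2 := by
  intro i j
  have E1 := hsol (i-1) (j-1)
  have E2 := hsol i (j-1)
  have E3 := hsol (i-1) j
  have E4 := hsol i j
  simp only [sub_add_cancel] at E1 E2 E3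
  have hfd : u (i+1) j - u (i-1) j ≠ 0 := sub_ne_zero_of_ne (hndn i j)
  have hca : u (i+1) (j-1) - u (i-1) (j-1) ≠ 0 := sub_ne_zero_of_ne (hndn i (j-1))
  have hkg : u (i+1) (j+1) - u (i-1) (j+1) ≠ 0 := sub_ne_zero_of_ne (hndn i (j+1))
  have hhb : u i (j+1) - u i (j-1) ≠ 0 := sub_ne_zero_of_ne (hndm i j)
  have hkc : u (i+1) (j+1) - u (i+1) (j-1) ≠ 0 := sub_ne_zero_of_ne (hndm (i+1) j)
  have hga : u (i-1) (j+1) - u (i-1) (j-1) ≠ 0 := sub_ne_zero_of_ne (hndm (i-1) j)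
  have hT : (u i (j+1) - u i (j-1))^2 * (u (i+1) (j+1) - u (i-1) (j+1))
              * (u (i+1) (j-1) - u (i-1) (j-1))
          = (u (i+1) j - u (i-1) j)^2 * (u (i+1) (j+1) - u (i+1) (j-1))
              * (u (i-1) (j+1) - u (i-1) (j-1)) := by
    linear_combination
      (2 * (u i (j+1)) * (u (i+1) (j+1)) - 2 * (u (i-1) (j+1)) * (u i (j+1)) + (u i j) * (u (i+1) j) - (u (i-1) j) * (u (i+1) (j+1)) + (u (i-1) j) * (u (i-1) (j+1)) - (u (i-1) j) * (u i j) - (u (i+1) (j-1)) * (u (i+1) j) + (u (i+1) (j-1)) * (u (i-1) j) - (u i (j-1)) * (u (i+1) (j+1)) + (u i (j-1)) * (u (i-1) (j+1))) * E1 +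
      (-2 * (u i (j+1)) * (u (i+1) (j+1)) + 2 * (u (i-1) (j+1)) * (u i (j+1)) + (u (i+1) j) * (u (i+1) (j+1)) - (u (i+1) j) * (u (i-1) (j+1)) - (u i j) * (u (i+1) j) + (u (i-1) j) * (u i j) + (u i (j-1)) * (u (i+1) (j+1)) - (u i (j-1)) * (u (i-1) (j+1)) + (u (i-1) (j-1)) * (u (i+1) j) - (u (i-1) (j-1)) * (u (i-1) j)) * E2 +
      (-(u (i+1) j) * (u (i+1) (j+1)) - (u i j) * (u (i+1) j) + (u (i-1) j) * (u (i+1) (j+1)) + (u (i-1) j) * (u i j) - (u (i+1) (j-1)) * (u i (j+1)) + 2 * (u (i+1) (j-1)) * (u (i+1) j) - (u (i+1) (j-1)) * (u (i-1) j) + (u (i-1) (j-1)) * (u i (j+1)) - (u (i-1) (j-1)) * (u (i-1) j)) * E3 +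
      ((u (i+1) j) * (u (i-1) (j+1)) + (u i j) * (u (i+1) j) - (u (i-1) j) * (u (i-1) (j+1)) - (u (i-1) j) * (u i j) + (u (i+1) (j-1)) * (u i (j+1)) - (u (i+1) (j-1)) * (u (i+1) j) - (u (i-1) (j-1)) * (u i (j+1)) - (u (i-1) (j-1)) * (u (i+1) j) + 2 * (u (i-1) (j-1)) * (u (i-1) j)) * E4
  rw [hRm (i+1) j, hRm (i-1) j, hRn i j, hRn i (j+1), hRn i (j-1), hRm i j]
  field_simp
  linear_combination (u (i+1) (j-1) + u (i-1) (j+1) - u (i-1) (j-1) - u (i+1) (j+1)) * hT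
end

section
/- For the ABS equation H2, with f(x,y,α) = 2(x+y+α) and r(α) = 1, and with R^{[0]}(u_{−1},u_0,u_1) = f(u_0,u_1,α)/(u_1 − u_{−1}) − (1/2) f_{,u_1}(u_0,u_1,α), the combination (S R^{[0]}) ∂_{u_1} R^{[0]} − (S^{−1} R^{[0]}) ∂_{u_{−1}} R^{[0]} − r(α) ∂_α R^{[0]} equals f(u_0,u_1,α) f(u_0,u_{−1},α)(u_2 − u_{−2}) / ((u_1 − u_{−1})² (u_2 − u_0)(u_{−2} − u_0)). -/
set_option maxHeartbeats 1000000


/-- Master-symmetry formula for the hierarchy characteristic `R¹`, verified for H2: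
with `f(x,y,α) = 2(x+y+α)`, `r(α) = 1` and
`R⁰ = f(u₀,u₁,α)/(u₁ − u₋₁) − 1`, one has
`(S R⁰)·∂R⁰/∂u₁ − (S⁻¹R⁰)·∂R⁰/∂u₋₁ − ∂R⁰/∂α
  = 4(u₀+u₁+α)(u₀+u₋₁+α)(u₂ − u₋₂)/((u₁ − u₋₁)²(u₂ − u₀)(u₋₂ − u₀))`. -/
theorem stmt_18 (um2 um1 u0 u1 u2 α : ℂ)
    (h1 : u1 ≠ um1) (h2 : u2 ≠ u0) (h3 : um2 ≠ u0) :
    (2 * (u1 + u2 + α) / (u2 - u0) - 1)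
        * (2 / (u1 - um1) - 2 * (u0 + u1 + α) / (u1 - um1) ^ 2)
      - (2 * (um1 + u0 + α) / (u0 - um2) - 1)
        * (2 * (u0 + u1 + α) / (u1 - um1) ^ 2)
      - 2 / (u1 - um1)
    = 4 * (u0 + u1 + α) * (u0 + um1 + α) * (u2 - um2)
        / ((u1 - um1) ^ 2 * (u2 - u0) * (um2 - u0)) := by
  have a : u1 - um1 ≠ 0 := sub_ne_zero.mpr h1
  have b : u2 - u0 ≠ 0 := sub_ne_zero.mpr h2
  have c : um2 - u0 ≠ 0 := sub_ne_zero.mpr h3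
  have d : u0 - um2 ≠ 0 := fun h => c (by linear_combination -h)
  have a2 : (u1 - um1) ^ 2 ≠ 0 := pow_ne_zero 2 a
  have e1 : (2 * (u1 + u2 + α) / (u2 - u0) - 1)
        * (2 / (u1 - um1) - 2 * (u0 + u1 + α) / (u1 - um1) ^ 2)
      = ((2 * (u1 + u2 + α) - (u2 - u0)) * (2 * (u1 - um1) - 2 * (u0 + u1 + α)))
        / ((u2 - u0) * (u1 - um1) ^ 2) := by
    field_simp
  have e2 : (2 * (um1 + u0 + α) / (u0 - um2) - 1)
        * (2 * (u0 + u1 + α) / (u1 - um1) ^ 2)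
      = ((2 * (um1 + u0 + α) - (u0 - um2)) * (2 * (u0 + u1 + α)))
        / ((u0 - um2) * (u1 - um1) ^ 2) := by
    field_simp
  rw [e1, e2, div_sub_div _ _ (mul_ne_zero b a2) (mul_ne_zero d a2),
    div_sub_div _ _ (mul_ne_zero (mul_ne_zero b a2) (mul_ne_zero d a2)) a,
    div_eq_div_iff (mul_ne_zero (mul_ne_zero (mul_ne_zero b a2) (mul_ne_zero d a2)) a)
      (mul_ne_zero (mul_ne_zero a2 b) c)]
  ring
end
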